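/- arXiv:2109.02761 — 4 statements merged into one kernel-verified Lean document; each statement's English description precedes it below -/
import Mathlib

section
/- The function f : ℝ^d → ℝ^d given by f(z) = z·exp(−‖z‖²/(4ε)) is globally Lipschitz with Lipschitz constant K_f = √(e^{-2}d² + d(1 − e^{-2})). -/
open Real

/-!
The map is in fact `1`-Lipschitz, and the stated constant is at least `1` as soon as `d ≥ 1`.
With `a = exp (-c‖z‖²)`, `b = exp (-c‖y‖²)` and `c = 1/(4ε)`, the gap `‖z - y‖² - ‖a • z - b • y‖²`
splits as `((‖z‖ - ‖y‖)² - (a‖z‖ - b‖y‖)²) + 2(1 - ab)(‖z‖‖y‖ - ⟪z, y⟫)`. Both terms are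
nonnegative, the first because the radial profile `r ↦ r exp (-c r²)` has derivative
`e⁻ᵗ (1 - 2t)`, `t = c r²`, of absolute value at most `1`.
-/

theorem abs_exp_neg_mul_one_sub_two_mul_le_one {t : ℝ} (ht : 0 ≤ t) :
    |exp (-t) * (1 - 2 * t)| ≤ 1 := by
  have hexp_pos : 0 < exp t := exp_pos t
  have hquad := quadratic_le_exp_of_nonneg ht
  rw [exp_neg, abs_le]
  constructor
  · rw [← sub_nonneg, ← mul_nonneg_iff_of_pos_left hexp_pos]
    field_simp
    nlinarith [sq_nonneg (t - 1)]
  · rw [inv_mul_le_iff₀ hexp_pos]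
    nlinarith

theorem hasDerivAt_mul_exp_neg_mul_sq (c x : ℝ) :
    HasDerivAt (fun x => x * exp (-c * x ^ 2)) (exp (-c * x ^ 2) * (1 - 2 * (c * x ^ 2))) x := by
  have hinner : HasDerivAt (fun x => -c * x ^ 2) (-c * (2 * x)) x := by
    simpa using (hasDerivAt_pow 2 x).const_mul (-c)
  exact ((hasDerivAt_id' x).mul hinner.exp).congr_deriv (by ring)

theorem lipschitzWith_one_mul_exp_neg_mul_sq {c : ℝ} (hc : 0 ≤ c) :
    LipschitzWith 1 (fun x : ℝ => x * exp (-c * x ^ 2)) := by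
  refine lipschitzWith_of_nnnorm_deriv_le
    (fun x => (hasDerivAt_mul_exp_neg_mul_sq c x).differentiableAt) fun x => ?_
  rw [(hasDerivAt_mul_exp_neg_mul_sq c x).deriv, ← NNReal.coe_le_coe, coe_nnnorm, norm_eq_abs,
    neg_mul, NNReal.coe_one]
  exact abs_exp_neg_mul_one_sub_two_mul_le_one (by positivity)

section InnerProductSpace

variable {E : Type*} [NormedAddCommGroup E] [InnerProductSpace ℝ E]

theorem norm_smul_sub_smul_le_norm_sub {a b : ℝ} (hab : a * b ≤ 1) (z y : E)
    (hnorm : |a * ‖z‖ - b * ‖y‖| ≤ |‖z‖ - ‖y‖|) : ‖a • z - b • y‖ ≤ ‖z - y‖ := by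
  have hsq_norm : (a * ‖z‖ - b * ‖y‖) ^ 2 ≤ (‖z‖ - ‖y‖) ^ 2 := sq_le_sq.mpr hnorm
  have hcs := real_inner_le_norm z y
  have hexpand :
      ‖a • z - b • y‖ ^ 2 = a ^ 2 * ‖z‖ ^ 2 - 2 * (a * b) * inner ℝ z y + b ^ 2 * ‖y‖ ^ 2 := by
    rw [norm_sub_sq_real, norm_smul, norm_smul, real_inner_smul_left, real_inner_smul_right,
      norm_eq_abs, norm_eq_abs, mul_pow, mul_pow, sq_abs, sq_abs]
    ring
  rw [← pow_le_pow_iff_left₀ (norm_nonneg _) (norm_nonneg _) two_ne_zero, hexpand,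
    norm_sub_sq_real]
  nlinarith [mul_le_mul_of_nonneg_left hcs (sub_nonneg.mpr hab)]

theorem lipschitzWith_one_exp_neg_mul_norm_sq_smul {c : ℝ} (hc : 0 ≤ c) :
    LipschitzWith 1 (fun z : E => exp (-c * ‖z‖ ^ 2) • z) := by
  refine LipschitzWith.of_dist_le_mul fun z y => ?_
  rw [NNReal.coe_one, one_mul, dist_eq_norm, dist_eq_norm]
  have hweight_le_one (w : E) : exp (-c * ‖w‖ ^ 2) ≤ 1 :=
    exp_le_one_iff.mpr (by nlinarith [sq_nonneg ‖w‖])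
  refine norm_smul_sub_smul_le_norm_sub ?_ z y ?_
  · exact mul_le_one₀ (hweight_le_one z) (exp_pos _).le (hweight_le_one y)
  · simpa only [mul_comm (exp _), NNReal.coe_one, one_mul, Real.dist_eq]
      using (lipschitzWith_one_mul_exp_neg_mul_sq hc).dist_le_mul ‖z‖ ‖y‖

end InnerProductSpace

theorem one_le_mul_sq_add_mul_one_sub {c x : ℝ} (hc : 0 ≤ c) (hx : 1 ≤ x) :
    1 ≤ c * x ^ 2 + x * (1 - c) := by
  nlinarith [mul_nonneg hc (mul_nonneg (by linarith : (0 : ℝ) ≤ x) (sub_nonneg.mpr hx))]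

/-- The function `f(z) = z·exp(-‖z‖²/(4ε))` is globally Lipschitz with constant
`K_f = √(e⁻²d² + d(1 - e⁻²))`. -/
theorem zexp_global_lipschitz (d : ℕ) (hd : 1 ≤ d) (ε : ℝ) (hε : 0 < ε)
    (f : EuclideanSpace ℝ (Fin d) → EuclideanSpace ℝ (Fin d))
    (hf : ∀ z, f z = Real.exp (-‖z‖ ^ 2 / (4 * ε)) • z) :
    ∀ z y, ‖f z - f y‖
      ≤ Real.sqrt (Real.exp (-2) * (d : ℝ) ^ 2 + (d : ℝ) * (1 - Real.exp (-2))) * ‖z - y‖ := by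
  intro z y
  have hf_eq : f = fun w => exp (-(4 * ε)⁻¹ * ‖w‖ ^ 2) • w := by
    funext w
    rw [hf, neg_div, div_eq_inv_mul, neg_mul]
  have hlip : ‖f z - f y‖ ≤ ‖z - y‖ := by
    simpa only [hf_eq, NNReal.coe_one, one_mul, dist_eq_norm]
      using (lipschitzWith_one_exp_neg_mul_norm_sq_smul (E := EuclideanSpace ℝ (Fin d))
        (c := (4 * ε)⁻¹) (by positivity)).dist_le_mul z y
  have hK : 1 ≤ √(exp (-2) * (d : ℝ) ^ 2 + (d : ℝ) * (1 - exp (-2))) :=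
    one_le_sqrt.mpr (one_le_mul_sq_add_mul_one_sub (exp_pos _).le (by exact_mod_cast hd))
  exact hlip.trans (le_mul_of_one_le_left (norm_nonneg _) hK)
end

section
/- Let T be an N×N row-stochastic matrix with all entries bounded above by (δN)^{-3/2}, where 0 < δ√(δN) < 1. Then for any two probability row-vectors v, w ∈ ℝ^N, ∑_m |(vT)_m − (wT)_m| ≤ ((δ^{3/2}√N)^{-1} − 1)·∑_j |v_j − w_j|. In particular T is a strict contraction in total variation whenever δ^{3/2}√N > 1/2. -/
/-!
Write `d = v - w`. Since `∑ d = 0`, its positive and negative parts `d⁺, d⁻` both have mass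
`D / 2`, where `D = ∑ |d_j|`. With `c` the entry bound of `T`, every entry of `d⁺T` and `d⁻T` is
at most `c D / 2`, so `|(dT)_m| ≤ c D - (d⁺T)_m - (d⁻T)_m`. Summing over `m` and using that `T`
preserves mass gives `(N c - 1) D`, and `N c ≤ (δ √(δN))⁻¹`.
-/

open Finset Matrix

section RowSumOne

variable {ι κ : Type*} [Fintype ι]

theorem sum_vecMul_of_sum_row_eq_one [Fintype κ] (T : Matrix ι κ ℝ)
    (hrow : ∀ j, ∑ m, T j m = 1) (x : ι → ℝ) : ∑ m, (x ᵥ* T) m = ∑ j, x j := by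
  simp only [vecMul, dotProduct]
  rw [sum_comm]
  simp_rw [← mul_sum, hrow, mul_one]

theorem vecMul_apply_le_sum_mul (T : Matrix ι κ ℝ) {c : ℝ} (hc : ∀ j m, T j m ≤ c)
    {x : ι → ℝ} (hx : ∀ j, 0 ≤ x j) (m : κ) : (x ᵥ* T) m ≤ (∑ j, x j) * c := by
  rw [sum_mul]
  exact sum_le_sum fun j _ => mul_le_mul_of_nonneg_left (hc j m) (hx j)

theorem sum_posPart_eq_half_sum_abs {d : ι → ℝ} (hd : ∑ j, d j = 0) :
    ∑ j, (d j)⁺ = (∑ j, |d j|) / 2 := by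
  have hsub : ∑ j, (d j)⁺ - ∑ j, (d j)⁻ = 0 := by
    rw [← sum_sub_distrib]; simpa only [posPart_sub_negPart] using hd
  have hadd : ∑ j, (d j)⁺ + ∑ j, (d j)⁻ = ∑ j, |d j| := by
    rw [← sum_add_distrib]; simp only [posPart_add_negPart]
  linarith

theorem sum_negPart_eq_half_sum_abs {d : ι → ℝ} (hd : ∑ j, d j = 0) :
    ∑ j, (d j)⁻ = (∑ j, |d j|) / 2 := by
  have hneg : ∑ j, (-d j) = 0 := by rw [sum_neg_distrib, hd, neg_zero]
  simpa only [posPart_neg, abs_neg] using sum_posPart_eq_half_sum_abs hneg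

theorem sum_abs_vecMul_le_of_sum_eq_zero [Fintype κ] (T : Matrix ι κ ℝ)
    (hrow : ∀ j, ∑ m, T j m = 1) {c : ℝ} (hc : ∀ j m, T j m ≤ c)
    {d : ι → ℝ} (hd : ∑ j, d j = 0) :
    ∑ m, |(d ᵥ* T) m| ≤ (Fintype.card κ * c - 1) * ∑ j, |d j| := by
  set D := ∑ j, |d j|
  set A := (fun j => (d j)⁺) ᵥ* T
  set B := (fun j => (d j)⁻) ᵥ* T
  have hdAB : d ᵥ* T = A - B := by
    rw [← sub_vecMul]; congr 1; ext j; exact (posPart_sub_negPart (d j)).symm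
  have hA : ∀ m, A m ≤ D / 2 * c := fun m => by
    simpa only [sum_posPart_eq_half_sum_abs hd]
      using vecMul_apply_le_sum_mul T hc (fun j => posPart_nonneg (d j)) m
  have hB : ∀ m, B m ≤ D / 2 * c := fun m => by
    simpa only [sum_negPart_eq_half_sum_abs hd]
      using vecMul_apply_le_sum_mul T hc (fun j => negPart_nonneg (d j)) m
  have hpoint : ∀ m, |A m - B m| ≤ D * c - A m - B m := fun m => by
    rw [abs_sub_le_iff]; constructor <;> linarith [hA m, hB m]
  have hsumA : ∑ m, A m = D / 2 := by
    rw [sum_vecMul_of_sum_row_eq_one T hrow, sum_posPart_eq_half_sum_abs hd]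
  have hsumB : ∑ m, B m = D / 2 := by
    rw [sum_vecMul_of_sum_row_eq_one T hrow, sum_negPart_eq_half_sum_abs hd]
  calc ∑ m, |(d ᵥ* T) m| = ∑ m, |A m - B m| := by rw [hdAB]; rfl
    _ ≤ ∑ m, (D * c - A m - B m) := sum_le_sum fun m _ => hpoint m
    _ = (Fintype.card κ * c - 1) * D := by
      rw [sum_sub_distrib, sum_sub_distrib, hsumA, hsumB, sum_const, card_univ, nsmul_eq_mul]
      ring

end RowSumOne

theorem markov_matrix_tv_contraction_general (N : ℕ) (δ : ℝ)
    (hδ0 : 0 < δ)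
    (T : Matrix (Fin N) (Fin N) ℝ)
    (hTrow : ∀ j, ∑ m, T j m = 1)
    (hTbd : ∀ j m, T j m ≤ (δ * N * Real.sqrt (δ * N))⁻¹)
    (v w : Fin N → ℝ)
    (hv : (∀ j, 0 ≤ v j) ∧ ∑ j, v j = 1) (hw : (∀ j, 0 ≤ w j) ∧ ∑ j, w j = 1) :
    ∑ m, |(∑ j, v j * T j m) - ∑ j, w j * T j m|
      ≤ ((δ * Real.sqrt (δ * N))⁻¹ - 1) * ∑ j, |v j - w j| := by
  have hmass : ∑ j, (v - w) j = 0 := by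
    simp only [Pi.sub_apply, sum_sub_distrib, hv.2, hw.2, sub_self]
  have hcard : (Fintype.card (Fin N) : ℝ) * (δ * N * Real.sqrt (δ * N))⁻¹
      ≤ (δ * Real.sqrt (δ * N))⁻¹ :=
    calc (Fintype.card (Fin N) : ℝ) * (δ * N * Real.sqrt (δ * N))⁻¹
        = (N * (N : ℝ)⁻¹) * (δ * Real.sqrt (δ * N))⁻¹ := by rw [Fintype.card_fin]; ring
      -- `N * N⁻¹ ≤ 1` also holds for `N = 0`, where `0⁻¹ = 0`.
      _ ≤ (δ * Real.sqrt (δ * N))⁻¹ := mul_le_of_le_one_left (by positivity) mul_inv_le_one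
  calc ∑ m, |(∑ j, v j * T j m) - ∑ j, w j * T j m| = ∑ m, |((v - w) ᵥ* T) m| := by
        rw [sub_vecMul]; rfl
    _ ≤ _ := sum_abs_vecMul_le_of_sum_eq_zero T hTrow hTbd hmass
    _ ≤ ((δ * Real.sqrt (δ * N))⁻¹ - 1) * ∑ j, |v j - w j| :=
        mul_le_mul_of_nonneg_right (by linarith) (sum_nonneg fun j _ => abs_nonneg _)

/-- Total variation contraction for a row-stochastic matrix with entries bounded by
`(δN)^{-3/2}`: for probability vectors `v, w`,
`∑_m |(vT)_m - (wT)_m| ≤ ((δ^{3/2}√N)⁻¹ - 1)·∑_j |v_j - w_j|`,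
where `δ^{3/2}√N = δ√(δN)`. -/
theorem markov_matrix_tv_contraction (N : ℕ) (hN : 1 ≤ N) (δ : ℝ)
    (hδ0 : 0 < δ) (hδ1 : δ < 1) (hδN : δ * Real.sqrt (δ * N) < 1)
    (T : Matrix (Fin N) (Fin N) ℝ)
    (hTpos : ∀ j m, 0 ≤ T j m) (hTrow : ∀ j, ∑ m, T j m = 1)
    (hTbd : ∀ j m, T j m ≤ (δ * N * Real.sqrt (δ * N))⁻¹)
    (v w : Fin N → ℝ)
    (hv : (∀ j, 0 ≤ v j) ∧ ∑ j, v j = 1) (hw : (∀ j, 0 ≤ w j) ∧ ∑ j, w j = 1) :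
    ∑ m, |(∑ j, v j * T j m) - ∑ j, w j * T j m|
      ≤ ((δ * Real.sqrt (δ * N))⁻¹ - 1) * ∑ j, |v j - w j| :=
  markov_matrix_tv_contraction_general N δ hδ0 T hTrow hTbd v w hv hw
end

section
/- Under the contraction of the previous setup, for every n ≥ 1 and all indices k, l: ∑_m |(T^n)_{km} − (T^n)_{lm}| ≤ ((δ^{3/2}√N)^{-1} − 1)^{n−1} · ∑_j |T_{kj} − T_{lj}|. -/
/-!
A difference `d` of two rows of a matrix with unit row sums has total mass zero, so
`d = d⁺ - d⁻` with `∑ d⁺ = ∑ d⁻ = S` and `∑ |d| = 2S`. If every entry of `T` is at most `a`,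
each coordinate of `d⁺ ᵥ* T` and of `d⁻ ᵥ* T` is at most `S a`, hence
`((d ᵥ* T) m)⁺ ≤ S a - (d⁻ ᵥ* T) m`. Summing over the `N` columns, and using that `d ᵥ* T` again
has mass zero, gives `∑ |d ᵥ* T| ≤ 2 (N S a - S) = (N a - 1) ∑ |d|`. Rows of `Tⁿ⁺¹` differ by
such a product with `d` a difference of rows of `Tⁿ`, so the bound iterates; with
`a = (δN)^{-3/2}` the factor is `N a - 1 = (δ^{3/2}√N)⁻¹ - 1`.
-/

open Finset Matrix

section Contraction

variable {ι : Type*} [Fintype ι] {T : Matrix ι ι ℝ} {a : ℝ}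

lemma sum_abs_eq_two_mul_sum_posPart {d : ι → ℝ} (hd : ∑ j, d j = 0) :
    ∑ j, |d j| = 2 * ∑ j, (d j)⁺ := by
  have h := Finset.sum_congr rfl fun j (_ : j ∈ univ) => abs_add_eq_two_nsmul_posPart (d j)
  rw [sum_add_distrib, hd, add_zero, ← smul_sum, two_nsmul] at h
  rw [h, two_mul]

lemma sum_negPart_eq_sum_posPart {d : ι → ℝ} (hd : ∑ j, d j = 0) :
    ∑ j, (d j)⁻ = ∑ j, (d j)⁺ := by
  have h := Finset.sum_congr rfl fun j (_ : j ∈ univ) => posPart_sub_negPart (d j)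
  rw [sum_sub_distrib, hd] at h
  linarith

lemma sum_vecMul_of_mulVec_one (hT : T *ᵥ 1 = 1) (v : ι → ℝ) :
    ∑ m, (v ᵥ* T) m = ∑ j, v j := by
  rw [← dotProduct_one, ← dotProduct_mulVec, hT, dotProduct_one]

lemma vecMul_apply_le_sum_mul_s8 (hTa : ∀ j m, T j m ≤ a) {g : ι → ℝ} (hg : ∀ j, 0 ≤ g j)
    (m : ι) : (g ᵥ* T) m ≤ (∑ j, g j) * a := by
  rw [sum_mul]
  exact sum_le_sum fun j _ => mul_le_mul_of_nonneg_left (hTa j m) (hg j)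

theorem sum_abs_vecMul_le (hT : T *ᵥ 1 = 1) (hTa : ∀ j m, T j m ≤ a) {d : ι → ℝ}
    (hd : ∑ j, d j = 0) :
    ∑ m, |(d ᵥ* T) m| ≤ (Fintype.card ι * a - 1) * ∑ j, |d j| := by
  set S := ∑ j, (d j)⁺
  have hneg : ∑ j, d⁻ j = S := sum_negPart_eq_sum_posPart hd
  have hsplit : d ᵥ* T = d⁺ ᵥ* T - d⁻ ᵥ* T := by rw [← sub_vecMul, posPart_sub_negPart]
  have hcol : ∀ m, ((d ᵥ* T) m)⁺ ≤ S * a - (d⁻ ᵥ* T) m := by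
    intro m
    have hplus := vecMul_apply_le_sum_mul_s8 hTa (g := d⁺) (fun j => posPart_nonneg _) m
    have hminus := vecMul_apply_le_sum_mul_s8 hTa (g := d⁻) (fun j => negPart_nonneg _) m
    rw [hneg] at hminus
    rw [hsplit, Pi.sub_apply]
    exact sup_le (sub_le_sub_right hplus _) (sub_nonneg.2 hminus)
  calc ∑ m, |(d ᵥ* T) m|
      = 2 * ∑ m, ((d ᵥ* T) m)⁺ := by
        rw [sum_abs_eq_two_mul_sum_posPart (by rw [sum_vecMul_of_mulVec_one hT, hd])]
    _ ≤ 2 * ∑ m, (S * a - (d⁻ ᵥ* T) m) := by gcongr with m; exact hcol m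
    _ = (Fintype.card ι * a - 1) * ∑ j, |d j| := by
        rw [sum_sub_distrib, sum_vecMul_of_mulVec_one hT, hneg, sum_const, card_univ,
          nsmul_eq_mul, sum_abs_eq_two_mul_sum_posPart hd]
        ring

lemma pow_mulVec_one [DecidableEq ι] (hT : T *ᵥ 1 = 1) (n : ℕ) : T ^ n *ᵥ 1 = 1 := by
  induction n with
  | zero => exact one_mulVec 1
  | succ n ih => rw [pow_succ, ← mulVec_mulVec, hT, ih]

lemma one_le_card_mul (hT : T *ᵥ 1 = 1) (hTa : ∀ j m, T j m ≤ a) (k : ι) :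
    1 ≤ Fintype.card ι * a :=
  calc (1 : ℝ) = ∑ m, T k m := by rw [← dotProduct_one]; exact (congrFun hT k).symm
    _ ≤ ∑ _m : ι, a := sum_le_sum fun m _ => hTa k m
    _ = Fintype.card ι * a := by rw [sum_const, card_univ, nsmul_eq_mul]

theorem sum_abs_pow_succ_sub_le [DecidableEq ι] (hT : T *ᵥ 1 = 1) (hTa : ∀ j m, T j m ≤ a)
    (n : ℕ) (k l : ι) :
    ∑ m, |(T ^ (n + 1)) k m - (T ^ (n + 1)) l m|
      ≤ (Fintype.card ι * a - 1) ^ n * ∑ j, |T k j - T l j| := by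
  induction n with
  | zero => simp
  | succ n ih =>
    have hmass : ∑ j, ((T ^ (n + 1)) k - (T ^ (n + 1)) l) j = 0 := by
      have hrow (i : ι) : ∑ j, (T ^ (n + 1)) i j = 1 := by
        rw [← dotProduct_one]; exact congrFun (pow_mulVec_one hT (n + 1)) i
      simp only [Pi.sub_apply, sum_sub_distrib, hrow, sub_self]
    have hc : 0 ≤ Fintype.card ι * a - 1 := sub_nonneg.2 (one_le_card_mul hT hTa k)
    calc ∑ m, |(T ^ (n + 2)) k m - (T ^ (n + 2)) l m|
        = ∑ m, |(((T ^ (n + 1)) k - (T ^ (n + 1)) l) ᵥ* T) m| := by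
          simp only [pow_succ _ (n + 1), mul_apply_eq_vecMul, sub_vecMul, Pi.sub_apply]
      _ ≤ (Fintype.card ι * a - 1) * ∑ j, |(T ^ (n + 1)) k j - (T ^ (n + 1)) l j| :=
          sum_abs_vecMul_le hT hTa hmass
      _ ≤ (Fintype.card ι * a - 1) * ((Fintype.card ι * a - 1) ^ n * ∑ j, |T k j - T l j|) :=
          mul_le_mul_of_nonneg_left ih hc
      _ = (Fintype.card ι * a - 1) ^ (n + 1) * ∑ j, |T k j - T l j| := by ring

end Contraction

theorem markov_matrix_power_contraction_general (N : ℕ) (δ : ℝ)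
    (T : Matrix (Fin N) (Fin N) ℝ)
    (hTrow : ∀ j, ∑ m, T j m = 1)
    (hTbd : ∀ j m, T j m ≤ (δ * N * Real.sqrt (δ * N))⁻¹) :
    ∀ n : ℕ, 1 ≤ n → ∀ k l : Fin N,
      ∑ m, |(T ^ n) k m - (T ^ n) l m|
        ≤ ((δ * Real.sqrt (δ * N))⁻¹ - 1) ^ (n - 1) * ∑ j, |T k j - T l j| := by
  intro n hn k l
  obtain ⟨n, rfl⟩ := Nat.exists_eq_add_of_le' hn
  have hT : T *ᵥ 1 = 1 := funext fun j => (dotProduct_one _).trans (hTrow j)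
  have hN : (N : ℝ) ≠ 0 := Nat.cast_ne_zero.2 (Fin.pos k).ne'
  have hfactor : (N : ℝ) * (δ * N * Real.sqrt (δ * N))⁻¹ = (δ * Real.sqrt (δ * N))⁻¹ := by
    rw [mul_right_comm, mul_inv, mul_left_comm, mul_inv_cancel₀ hN, mul_one]
  simpa only [Fintype.card_fin, hfactor, add_tsub_cancel_right] using
    sum_abs_pow_succ_sub_le hT hTbd n k l

/-- Iterated contraction: for every `n ≥ 1` and all indices `k, l`,
`∑_m |(Tⁿ)_{km} - (Tⁿ)_{lm}| ≤ ((δ^{3/2}√N)⁻¹ - 1)^{n-1}·∑_j |T_{kj} - T_{lj}|`. -/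
theorem markov_matrix_power_contraction (N : ℕ) (hN : 1 ≤ N) (δ : ℝ)
    (hδ0 : 0 < δ) (hδ1 : δ < 1)
    (hδN : δ * Real.sqrt (δ * N) < 1) (hδN' : 1 / 2 < δ * Real.sqrt (δ * N))
    (T : Matrix (Fin N) (Fin N) ℝ)
    (hTpos : ∀ j m, 0 ≤ T j m) (hTrow : ∀ j, ∑ m, T j m = 1)
    (hTbd : ∀ j m, T j m ≤ (δ * N * Real.sqrt (δ * N))⁻¹) :
    ∀ n : ℕ, 1 ≤ n → ∀ k l : Fin N,
      ∑ m, |(T ^ n) k m - (T ^ n) l m|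
        ≤ ((δ * Real.sqrt (δ * N))⁻¹ - 1) ^ (n - 1) * ∑ j, |T k j - T l j| :=
  markov_matrix_power_contraction_general N δ T hTrow hTbd
end

section
/- Let T be as in the contraction setup with 1/2 < δ^{3/2}√N (so q := (δ^{3/2}√N)^{-1} − 1 ∈ [0,1)). If h ∈ ℝ^N satisfies ‖h‖_∞ ≤ H, then for all k, l: |∑_{n=0}^∞ ((T^n h)_k − (T^n h)_l)| ≤ 2H + H·(∑_j |T_{kj} − T_{lj}|)·(2 − (δ^{3/2}√N)^{-1})^{-1}, where the series converges absolutely. -/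
/-!
The sums `∑ⱼ |T k j - T l j|` are at most `2q`, because two vectors of total mass `1` with
entries at most `c` differ in `ℓ¹` by at most `2 (N c - 1)`. Hence `T` contracts the
oscillation `maxⱼₘ (g j - g m)` by the factor `q`, so the `n`-th term of the series is at
most `2 H qⁿ`; bounding the terms with `n ≥ 1` through one more application of `T` gives
the geometric tail `H (∑ⱼ |T k j - T l j|) qⁿ⁻¹`.
-/

open Finset Matrix

section Oscillation

variable {ι κ : Type*} [Fintype ι]

/-- Against a vector `d` of total mass zero, `g` may be replaced by `g - c` with `c` the midpoint
of its range. -/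
theorem abs_sum_mul_le_of_sum_eq_zero {d g : ι → ℝ} (hd : ∑ j, d j = 0) {C : ℝ}
    (hg : ∀ j m, g j - g m ≤ C) : |∑ j, d j * g j| ≤ (∑ j, |d j|) * (C / 2) := by
  cases isEmpty_or_nonempty ι
  · simp
  obtain ⟨jmax, hmax⟩ := Finite.exists_max g
  obtain ⟨jmin, hmin⟩ := Finite.exists_min g
  set c := (g jmax + g jmin) / 2 with hc
  have hdev : ∀ j, |g j - c| ≤ C / 2 := fun j => by
    rw [abs_le]; constructor <;> linarith [hmax j, hmin j, hg jmax jmin]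
  have hshift : ∑ j, d j * g j = ∑ j, d j * (g j - c) := by
    simp only [mul_sub, sum_sub_distrib, ← sum_mul, hd, zero_mul, sub_zero]
  calc |∑ j, d j * g j| = |∑ j, d j * (g j - c)| := by rw [hshift]
    _ ≤ ∑ j, |d j| * |g j - c| := (abs_sum_le_sum_abs _ _).trans_eq (by simp only [abs_mul])
    _ ≤ ∑ j, |d j| * (C / 2) := by gcongr with j; exact hdev j
    _ = (∑ j, |d j|) * (C / 2) := by rw [sum_mul]

theorem abs_mulVec_sub_mulVec_le {T : Matrix κ ι ℝ} {k l : κ}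
    (hT : ∑ j, T k j = ∑ j, T l j) {g : ι → ℝ} {C : ℝ} (hg : ∀ j m, g j - g m ≤ C) :
    |(T *ᵥ g) k - (T *ᵥ g) l| ≤ (∑ j, |T k j - T l j|) * (C / 2) := by
  have hd : ∑ j, (T k j - T l j) = 0 := by rw [sum_sub_distrib, hT, sub_self]
  have hdiff : (T *ᵥ g) k - (T *ᵥ g) l = ∑ j, (T k j - T l j) * g j := by
    simp only [mulVec, dotProduct, sub_mul, sum_sub_distrib]
  rw [hdiff]
  exact abs_sum_mul_le_of_sum_eq_zero hd hg

theorem sum_abs_sub_le_of_le {u v : ι → ℝ} {c : ℝ}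
    (huc : ∀ j, u j ≤ c) (hvc : ∀ j, v j ≤ c) (hu : ∑ j, u j = 1) (hv : ∑ j, v j = 1) :
    ∑ j, |u j - v j| ≤ 2 * (Fintype.card ι * c - 1) := by
  calc ∑ j, |u j - v j| ≤ ∑ j, (2 * c - u j - v j) := by
        gcongr with j
        rw [abs_le]; constructor <;> linarith [huc j, hvc j]
    _ = 2 * (Fintype.card ι * c - 1) := by
        simp only [sum_sub_distrib, hu, hv, sum_const, card_univ, nsmul_eq_mul]
        ring

theorem abs_pow_mulVec_sub_mulVec_le [DecidableEq ι] {T : Matrix ι ι ℝ}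
    (hrow : ∀ k, ∑ j, T k j = 1) {q : ℝ} (hq : ∀ k l, ∑ j, |T k j - T l j| ≤ 2 * q)
    {g : ι → ℝ} {C : ℝ} (hg : ∀ j m, |g j - g m| ≤ C) (n : ℕ) (k l : ι) :
    |(T ^ n *ᵥ g) k - (T ^ n *ᵥ g) l| ≤ C * q ^ n := by
  induction n generalizing k l with
  | zero => simpa using hg k l
  | succ n ih =>
    have hCq : 0 ≤ C * q ^ n := by simpa using ih k k
    rw [pow_succ', ← mulVec_mulVec]
    calc _ ≤ (∑ j, |T k j - T l j|) * (C * q ^ n / 2) :=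
          abs_mulVec_sub_mulVec_le ((hrow k).trans (hrow l).symm) fun j m =>
            (le_abs_self _).trans (ih j m)
      _ ≤ 2 * q * (C * q ^ n / 2) := by gcongr; exact hq k l
      _ = C * q ^ (n + 1) := by ring

end Oscillation

section GeometricTail

variable {D : ℕ → ℝ} {A B q : ℝ}

theorem summable_abs_of_abs_succ_le_geometric (hq0 : 0 ≤ q) (hq1 : q < 1)
    (hD : ∀ n, |D (n + 1)| ≤ B * q ^ n) : Summable fun n => |D n| := by
  rw [← summable_nat_add_iff 1]
  exact ((summable_geometric_of_lt_one hq0 hq1).mul_left B).of_nonneg_of_le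
    (fun _ => abs_nonneg _) hD

theorem abs_tsum_le_of_abs_succ_le_geometric (hq0 : 0 ≤ q) (hq1 : q < 1) (hD0 : |D 0| ≤ A)
    (hD : ∀ n, |D (n + 1)| ≤ B * q ^ n) : |∑' n, D n| ≤ A + B * (1 - q)⁻¹ := by
  have hsum : Summable D := (summable_abs_of_abs_succ_le_geometric hq0 hq1 hD).of_abs
  have htail : |∑' n, D (n + 1)| ≤ B * (1 - q)⁻¹ :=
    tsum_of_norm_bounded (f := fun n => D (n + 1))
      ((hasSum_geometric_of_lt_one hq0 hq1).mul_left B) hD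
  rw [hsum.tsum_eq_zero_add]
  exact (abs_add_le _ _).trans (add_le_add hD0 htail)

end GeometricTail

theorem neumann_series_bound_general (N : ℕ) (δ H : ℝ)
    (hδN' : 1 / 2 < δ * Real.sqrt (δ * N))
    (T : Matrix (Fin N) (Fin N) ℝ)
    (hTrow : ∀ j, ∑ m, T j m = 1)
    (hTbd : ∀ j m, T j m ≤ (δ * N * Real.sqrt (δ * N))⁻¹)
    (h : Fin N → ℝ) (hH : ∀ m, |h m| ≤ H) :
    ∀ k l : Fin N,
      Summable (fun n : ℕ => |(T ^ n).mulVec h k - (T ^ n).mulVec h l|)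
      ∧ |∑' n : ℕ, ((T ^ n).mulVec h k - (T ^ n).mulVec h l)|
          ≤ 2 * H + H * (∑ j, |T k j - T l j|) * (2 - (δ * Real.sqrt (δ * N))⁻¹)⁻¹ := by
  intro k l
  set a := δ * Real.sqrt (δ * N)
  have hN : (N : ℝ) ≠ 0 := by exact_mod_cast k.pos.ne'
  have hTV : ∀ k l, ∑ j, |T k j - T l j| ≤ 2 * (a⁻¹ - 1) := fun k l => by
    have hcard : (Fintype.card (Fin N) : ℝ) * (δ * N * Real.sqrt (δ * N))⁻¹ = a⁻¹ := by
      rw [Fintype.card_fin, mul_right_comm, _root_.mul_inv_rev, ← mul_assoc,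
        mul_inv_cancel₀ hN, one_mul]
    simpa only [hcard] using sum_abs_sub_le_of_le (hTbd k) (hTbd l) (hTrow k) (hTrow l)
  -- `q ≥ 0` is forced: at `k = l` the total-variation bound reads `0 ≤ 2q`.
  have hq0 : 0 ≤ a⁻¹ - 1 := by simpa using hTV k k
  have hq1 : a⁻¹ - 1 < 1 := by
    rw [sub_lt_iff_lt_add, one_add_one_eq_two, inv_lt_comm₀ (by linarith) two_pos]
    linarith
  have hosc : ∀ j m, |h j - h m| ≤ 2 * H := fun j m =>
    (abs_sub _ _).trans (by linarith [hH j, hH m])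
  have hD0 : |(T ^ 0 *ᵥ h) k - (T ^ 0 *ᵥ h) l| ≤ 2 * H := by simpa using hosc k l
  have hD : ∀ n, |(T ^ (n + 1) *ᵥ h) k - (T ^ (n + 1) *ᵥ h) l|
      ≤ H * (∑ j, |T k j - T l j|) * (a⁻¹ - 1) ^ n := fun n => by
    rw [pow_succ', ← mulVec_mulVec]
    refine (abs_mulVec_sub_mulVec_le ((hTrow k).trans (hTrow l).symm) fun j m =>
      (le_abs_self _).trans (abs_pow_mulVec_sub_mulVec_le hTrow hTV hosc n j m)).trans_eq ?_
    ring
  have h2q : 1 - (a⁻¹ - 1) = 2 - a⁻¹ := by ring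
  refine ⟨summable_abs_of_abs_succ_le_geometric hq0 hq1 hD, ?_⟩
  simpa only [h2q] using abs_tsum_le_of_abs_succ_le_geometric hq0 hq1 hD0 hD

/-- Neumann series bound: with `q = (δ^{3/2}√N)⁻¹ - 1 ∈ [0,1)` and `‖h‖_∞ ≤ H`,
the series `∑_n ((Tⁿh)_k - (Tⁿh)_l)` converges absolutely and
`|∑_{n=0}^∞ ((Tⁿh)_k - (Tⁿh)_l)| ≤ 2H + H·(∑_j |T_{kj} - T_{lj}|)·(2 - (δ^{3/2}√N)⁻¹)⁻¹`. -/
theorem neumann_series_bound (N : ℕ) (hN : 1 ≤ N) (δ H : ℝ)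
    (hδ0 : 0 < δ) (hδ1 : δ < 1)
    (hδN : δ * Real.sqrt (δ * N) < 1) (hδN' : 1 / 2 < δ * Real.sqrt (δ * N))
    (T : Matrix (Fin N) (Fin N) ℝ)
    (hTpos : ∀ j m, 0 ≤ T j m) (hTrow : ∀ j, ∑ m, T j m = 1)
    (hTbd : ∀ j m, T j m ≤ (δ * N * Real.sqrt (δ * N))⁻¹)
    (h : Fin N → ℝ) (hH : ∀ m, |h m| ≤ H) :
    ∀ k l : Fin N,
      Summable (fun n : ℕ => |(T ^ n).mulVec h k - (T ^ n).mulVec h l|)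
      ∧ |∑' n : ℕ, ((T ^ n).mulVec h k - (T ^ n).mulVec h l)|
          ≤ 2 * H + H * (∑ j, |T k j - T l j|) * (2 - (δ * Real.sqrt (δ * N))⁻¹)⁻¹ :=
  neumann_series_bound_general N δ H hδN' T hTrow hTbd h hH
end
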